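/- arXiv:2511.18218 — 9 statements merged into one kernel-verified Lean document; each statement's English description precedes it below -/
import Mathlib

section
/- Let A be a simple algebra in a pre-Tannakian category over a field k. Then Γ(A) = Hom(𝟙, A) is a finite field extension of k (i.e., a finite-dimensional commutative k-algebra that is a field). -/
open CategoryTheory CategoryTheory.Limits CategoryTheory.MonoidalCategory

/-!
We work with a pre-Tannakian category over a field `k`: an abelian `k`-linear symmetric
monoidal category with `k`-bilinear tensor product, in which every object has finite
length, all Hom-spaces are finite dimensional over `k`, every object is rigid, and the
canonical map `k → End 𝟙` is bijective. Algebras are commutative monoid objects.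
-/

section
variable {k : Type*} [Field k]
variable {C : Type*} [Category C] [Abelian C] [Linear k C]
  [MonoidalCategory C] [MonoidalPreadditive C] [MonoidalLinear k C]
  [SymmetricCategory C] [RigidCategory C]

/-- `I` is an ideal of the commutative algebra object `A`: the multiplication restricted
to `A ⊗ I` factors through `I`. -/
def IsIdeal (A : CommMon C) (I : Subobject A.X) : Prop :=
  I.Factors ((A.X ◁ I.arrow) ≫ MonObj.mul (X := A.X))

/-- A commutative algebra object is simple if it is nonzero and its only ideals are
the zero ideal and the unit ideal. -/
def IsSimpleAlgebra (A : CommMon C) : Prop :=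
  ¬ IsZero A.X ∧ ∀ I : Subobject A.X, IsIdeal A I → I = ⊥ ∨ I = ⊤

/-- The product on `Γ(A) = Hom(𝟙, A)`, given by `x · y = μ ∘ (x ⊗ y) ∘ (unitor)⁻¹`. -/
def gammaMul (A : CommMon C) (x y : 𝟙_ C ⟶ A.X) : 𝟙_ C ⟶ A.X :=
  (λ_ (𝟙_ C)).inv ≫ (x ⊗ₘ y) ≫ MonObj.mul (X := A.X)

/-- The morphism `A ⟶ Aᘁ` induced by a bilinear form `f : A ⊗ A ⟶ 𝟙`. -/
noncomputable def pairingHom (A : C) (f : A ⊗ A ⟶ 𝟙_ C) : A ⟶ Aᘁ :=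
  (tensorRightHomEquiv A A (Aᘁ) (𝟙_ C)) f ≫ (λ_ (Aᘁ)).hom

/-- A bilinear form `f : A ⊗ A ⟶ 𝟙` is perfect if the induced morphism `A ⟶ Aᘁ`
is an isomorphism. -/
def IsPerfectPairing (A : C) (f : A ⊗ A ⟶ 𝟙_ C) : Prop :=
  IsIso (pairingHom A f)

/-- The trace map `ε_A : A ⟶ 𝟙` of an algebra object: the mate `A ⟶ A ⊗ Aᘁ` of the
multiplication (encoding the action of `A` on itself by multiplication) composed with
the symmetry and the evaluation. -/
noncomputable def traceMap (A : CommMon C) : A.X ⟶ 𝟙_ C :=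
  (tensorRightHomEquiv A.X A.X (A.Xᘁ) A.X) (MonObj.mul (X := A.X)) ≫ (β_ A.X (A.Xᘁ)).hom ≫ ε_ A.X (A.Xᘁ)

/-- An algebra object is étale if its trace form `ε_A ∘ μ` is a perfect pairing. -/
noncomputable def IsEtale (A : CommMon C) : Prop :=
  IsPerfectPairing A.X (MonObj.mul (X := A.X) ≫ traceMap A)

/-- The categorical dimension of `X`, as an endomorphism of the unit object:
the composite of coevaluation, symmetry and evaluation. -/
noncomputable def dimMor (X : C) : 𝟙_ C ⟶ 𝟙_ C :=
  η_ X (Xᘁ) ≫ (β_ X (Xᘁ)).hom ≫ ε_ X (Xᘁ)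

/-- A category is semisimple if every object is a finite direct sum of simple objects. -/
def IsSemisimpleCategory : Prop :=
  haveI : HasFiniteBiproducts C := Abelian.hasFiniteBiproducts
  ∀ X : C, ∃ (n : ℕ) (f : Fin n → C), (∀ i, Simple (f i)) ∧ Nonempty (X ≅ ⨁ f)

end

/-!
For `x ∈ Γ(A)`, right multiplication `r_x : A ⟶ A` by `x` commutes with left multiplication, so
its image is an ideal; here rigidity enters, since `A ⊗ -` is a left adjoint and so keeps
`A ⊗ A ↠ A ⊗ im r_x` an epimorphism. If `x ≠ 0` then `r_x ≠ 0`, so by simplicity `r_x` is an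
epimorphism. As `End A` is finite dimensional, composing with `r_x` is injective hence
surjective on `End A`, so `r_x` has a right inverse and is an isomorphism; then
`1 ≫ r_x⁻¹` is the inverse of `x`.
-/

open MonObj

namespace MonObj

section
variable {C : Type*} [Category C] [MonoidalCategory C] {M : C} [MonObj M]

def mulRight (x : 𝟙_ C ⟶ M) : M ⟶ M :=
  (ρ_ M).inv ≫ (M ◁ x) ≫ μ

theorem comp_mulRight (w x : 𝟙_ C ⟶ M) :
    w ≫ mulRight x = (λ_ (𝟙_ C)).inv ≫ (w ⊗ₘ x) ≫ μ := by
  rw [mulRight, rightUnitor_inv_naturality_assoc, ← tensorHom_def_assoc, unitors_inv_equal]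

theorem one_comp_mulRight (x : 𝟙_ C ⟶ M) : η ≫ mulRight x = x := by
  simp [comp_mulRight, tensorHom_def']

theorem whiskerLeft_mulRight_mul (x : 𝟙_ C ⟶ M) :
    (M ◁ mulRight x) ≫ μ = μ ≫ mulRight x := by
  simp only [mulRight, MonoidalCategory.whiskerLeft_comp, Category.assoc]
  rw [show M ◁ μ ≫ μ = (α_ M M M).inv ≫ (μ ▷ M) ≫ μ by simp [MonObj.mul_assoc],
    associator_inv_naturality_right_assoc, whisker_exchange_assoc]
  slice_lhs 1 2 =>
    rw [show M ◁ (ρ_ M).inv ≫ (α_ M M (𝟙_ C)).inv = (ρ_ (M ⊗ M)).inv by monoidal]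
  simp only [Category.assoc]
  rw [rightUnitor_inv_naturality_assoc]

theorem isZero_of_one_eq_zero [Preadditive C] [MonoidalPreadditive C] (h : η[M] = 0) :
    IsZero M := by
  rw [IsZero.iff_id_eq_zero, ← (λ_ M).inv_hom_id, ← MonObj.one_mul M, h]
  simp

end

end MonObj

theorem epi_whiskerLeft_of_hasLeftDual {C : Type*} [Category C] [MonoidalCategory C]
    (X : C) [HasLeftDual X] {Y Z : C} (e : Y ⟶ Z) [Epi e] : Epi (X ◁ e) :=
  have := (tensorLeftAdjunction (ᘁX) X).isLeftAdjoint
  (tensorLeft X).map_epi e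

theorem isIso_of_epi_of_finiteDimensional (k : Type*) [Field k] {C : Type*} [Category C]
    [Preadditive C] [Linear k C] {X : C} [FiniteDimensional k (X ⟶ X)] (f : X ⟶ X) [Epi f] :
    IsIso f := by
  have hinj : Function.Injective (Linear.leftComp k X f) := fun a b hab =>
    (cancel_epi f).mp hab
  obtain ⟨g, hfg : f ≫ g = 𝟙 X⟩ := LinearMap.injective_iff_surjective.mp hinj (𝟙 X)
  have hgf : g ≫ f = 𝟙 X := (cancel_epi f).mp (by
    rw [← Category.assoc, hfg, Category.id_comp, Category.comp_id])
  exact ⟨g, hfg, hgf⟩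

section
variable {C : Type*} [Category C] [MonoidalCategory C] [SymmetricCategory C]

theorem gammaMul_eq_comp_mulRight (A : CommMon C) (x y : 𝟙_ C ⟶ A.X) :
    gammaMul A x y = x ≫ mulRight y :=
  (comp_mulRight x y).symm

theorem gammaMul_comm (A : CommMon C) (x y : 𝟙_ C ⟶ A.X) :
    gammaMul A x y = gammaMul A y x := by
  conv_lhs => rw [gammaMul, ← IsCommMonObj.mul_comm A.X]
  rw [BraidedCategory.braiding_naturality_assoc, leftUnitor_inv_braiding_assoc,
    ← unitors_inv_equal, gammaMul]

theorem isIdeal_imageSubobject [Abelian C] {A : CommMon C} [HasLeftDual A.X] {f : A.X ⟶ A.X}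
    (hf : (A.X ◁ f) ≫ μ = μ ≫ f) : IsIdeal A (imageSubobject f) := by
  have := epi_whiskerLeft_of_hasLeftDual A.X (factorThruImageSubobject f)
  have := strongEpi_of_epi (A.X ◁ factorThruImageSubobject f)
  have sq : CommSq (μ ≫ factorThruImageSubobject f) (A.X ◁ factorThruImageSubobject f)
      (imageSubobject f).arrow ((A.X ◁ (imageSubobject f).arrow) ≫ μ) := ⟨by
    rw [Category.assoc, imageSubobject_arrow_comp, ← MonoidalCategory.whiskerLeft_comp_assoc,
      imageSubobject_arrow_comp, hf]⟩
  unfold IsIdeal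
  rw [← sq.fac_right]
  exact Subobject.factors_comp_arrow _

theorem epi_mulRight_of_isSimpleAlgebra [Abelian C] [RigidCategory C] {A : CommMon C}
    (hA : IsSimpleAlgebra A) {x : 𝟙_ C ⟶ A.X} (hx : x ≠ 0) : Epi (mulRight x) := by
  rcases hA.2 _ (isIdeal_imageSubobject (whiskerLeft_mulRight_mul x)) with hbot | htop
  · have harrow : (imageSubobject (mulRight x)).arrow = 0 := by
      rw [hbot, Subobject.bot_arrow]
    refine absurd ?_ hx
    rw [← one_comp_mulRight x, ← imageSubobject_arrow_comp (mulRight x), harrow, comp_zero,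
      comp_zero]
  · have : IsIso (imageSubobject (mulRight x)).arrow :=
      (Subobject.isIso_arrow_iff_eq_top _).mpr htop
    rw [← imageSubobject_arrow_comp (mulRight x)]
    exact epi_comp _ _

end

theorem stmt_0_general {k : Type*} [Field k]
    {C : Type*} [Category C] [Abelian C] [Linear k C]
    [MonoidalCategory C] [MonoidalPreadditive C]
    [SymmetricCategory C] [RigidCategory C]
    (hfin : ∀ X Y : C, FiniteDimensional k (X ⟶ Y))
    (A : CommMon C) (hA : IsSimpleAlgebra A) :
    FiniteDimensional k (𝟙_ C ⟶ A.X) ∧ (MonObj.one (X := A.X) : 𝟙_ C ⟶ A.X) ≠ 0 ∧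
      ∀ x : 𝟙_ C ⟶ A.X, x ≠ 0 → ∃ y : 𝟙_ C ⟶ A.X, gammaMul A x y = MonObj.one (X := A.X) := by
  refine ⟨hfin _ _, fun h => hA.1 (isZero_of_one_eq_zero h), fun x hx => ?_⟩
  have := hfin A.X A.X
  have := epi_mulRight_of_isSimpleAlgebra hA hx
  have := isIso_of_epi_of_finiteDimensional k (mulRight x)
  refine ⟨η ≫ inv (mulRight x), ?_⟩
  rw [gammaMul_comm, gammaMul_eq_comp_mulRight, Category.assoc, IsIso.inv_hom_id,
    Category.comp_id]

/-- Let `A` be a simple algebra in a pre-Tannakian category over a field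
`k`. Then `Γ(A) = Hom(𝟙, A)` is a finite field extension of `k`: it is finite dimensional
over `k`, nontrivial, and every nonzero element is invertible. -/
theorem stmt_0 {k : Type*} [Field k]
    {C : Type*} [Category C] [Abelian C] [Linear k C]
    [MonoidalCategory C] [MonoidalPreadditive C] [MonoidalLinear k C]
    [SymmetricCategory C] [RigidCategory C]
    -- pre-Tannakian axioms: finite length, finite dimensional Hom spaces, `End 𝟙 = k`
    (hlen : ∀ X : C, WellFoundedGT (Subobject X) ∧ WellFoundedLT (Subobject X))
    (hfin : ∀ X Y : C, FiniteDimensional k (X ⟶ Y))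
    (hunit : Function.Bijective fun a : k => a • 𝟙 (𝟙_ C))
    (A : CommMon C) (hA : IsSimpleAlgebra A) :
    FiniteDimensional k (𝟙_ C ⟶ A.X) ∧ (MonObj.one (X := A.X) : 𝟙_ C ⟶ A.X) ≠ 0 ∧
      ∀ x : 𝟙_ C ⟶ A.X, x ≠ 0 → ∃ y : 𝟙_ C ⟶ A.X, gammaMul A x y = MonObj.one (X := A.X) :=
  stmt_0_general hfin A hA
end

section
/- Let A be a simple algebra in a pre-Tannakian category over a field k, and let λ : A → 𝟙 be a nonzero morphism. Then the bilinear form (·,·)_λ = λ ∘ μ : A ⊗ A → 𝟙 is perfect; that is, (A, λ) is a Frobenius algebra. -/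
open CategoryTheory CategoryTheory.Limits CategoryTheory.MonoidalCategory

/-!
The kernel of `φ : A ⟶ Aᘁ`, `φ(a) = λ(a · -)`, is an ideal by associativity and commutativity,
and it is not all of `A` because `λ = λ(1 · -)` is nonzero; as `A` is simple, `φ` is a
monomorphism. Since the form `λ ∘ μ` is symmetric, `φ` agrees with its own mate `φᘁ` up to the
isomorphism `A ≅ Aᘁᘁ`, and the mate of a monomorphism is an epimorphism. In an abelian category
`φ` is then an isomorphism.
-/

open scoped MonObj

section Duality

variable {C : Type*} [Category C] [MonoidalCategory C]

theorem rightDual_hom_ext {W X : C} [HasRightDual X] {u v : W ⟶ Xᘁ}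
    (h : u ▷ X ≫ ε_ X Xᘁ = v ▷ X ≫ ε_ X Xᘁ) : u = v := by
  have h' := congrArg (tensorRightHomEquiv W X Xᘁ (𝟙_ C)) h
  rw [tensorRightHomEquiv_whiskerRight_comp_evaluation,
    tensorRightHomEquiv_whiskerRight_comp_evaluation] at h'
  exact (cancel_mono (λ_ Xᘁ).inv).mp h'

variable [RigidCategory C]

theorem pairingHom_whiskerRight_comp_evaluation (X : C) (f : X ⊗ X ⟶ 𝟙_ C) :
    pairingHom X f ▷ X ≫ ε_ X Xᘁ = f := by
  apply (tensorRightHomEquiv X X Xᘁ (𝟙_ C)).injective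
  rw [tensorRightHomEquiv_whiskerRight_comp_evaluation]
  simp [pairingHom]

section Preadditive

variable [Preadditive C] [MonoidalPreadditive C]

theorem comp_pairingHom_eq_zero_iff {W X : C} (f : X ⊗ X ⟶ 𝟙_ C) (h : W ⟶ X) :
    h ≫ pairingHom X f = 0 ↔ h ▷ X ≫ f = 0 := by
  have hpair : (h ≫ pairingHom X f) ▷ X ≫ ε_ X Xᘁ = h ▷ X ≫ f := by
    rw [comp_whiskerRight, Category.assoc, pairingHom_whiskerRight_comp_evaluation]
  constructor
  · intro hh
    rw [← hpair, hh, MonoidalPreadditive.zero_whiskerRight, zero_comp]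
  · intro hh
    apply rightDual_hom_ext
    rw [hpair, hh, MonoidalPreadditive.zero_whiskerRight, zero_comp]

/-- Transposition `g ↦ η_X ≫ X ◁ g` is injective and turns precomposition with `fᘁ` into
postcomposition with `f ▷ Z`, which is a monomorphism because `- ⊗ Z` is a right adjoint. -/
theorem epi_rightAdjointMate_of_mono {X Y : C} (f : X ⟶ Y) [Mono f] : Epi (fᘁ) := by
  rw [Preadditive.epi_iff_cancel_zero]
  intro Z g hg
  have : (tensorRight Z).PreservesMonomorphisms :=
    Functor.preservesMonomorphisms_of_adjunction (tensorRightAdjunction (ᘁZ) Z)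
  have : Mono (f ▷ Z) := (tensorRight Z).map_mono f
  have htranspose : (η_ X Xᘁ ≫ X ◁ g) ≫ f ▷ Z = 0 := by
    rw [Category.assoc, whisker_exchange, ← Category.assoc,
      ← coevaluation_comp_rightAdjointMate, Category.assoc,
      ← MonoidalCategory.whiskerLeft_comp, hg, MonoidalPreadditive.whiskerLeft_zero, comp_zero]
  have h0 := congrArg (tensorLeftHomEquiv (𝟙_ C) X Xᘁ Z).symm (zero_of_comp_mono _ htranspose)
  rw [tensorLeftHomEquiv_symm_coevaluation_comp_whiskerLeft] at h0
  rw [← cancel_epi (ρ_ Xᘁ).hom, h0, comp_zero]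
  simp [tensorLeftHomEquiv]

end Preadditive

section Braided

variable [BraidedCategory C]

def doubleDualIso (X : C) : X ≅ (Xᘁ)ᘁ :=
  rightDualIso (BraidedCategory.exactPairing_swap X Xᘁ) HasRightDual.exact

theorem doubleDualIso_hom_whiskerRight_comp_evaluation (X : C) :
    (doubleDualIso X).hom ▷ Xᘁ ≫ ε_ Xᘁ (Xᘁ)ᘁ = (β_ X Xᘁ).hom ≫ ε_ X Xᘁ := by
  have h := @rightAdjointMate_comp_evaluation C _ _ Xᘁ Xᘁ _
    (@HasRightDual.mk C _ _ Xᘁ X (BraidedCategory.exactPairing_swap X Xᘁ)) (𝟙 Xᘁ)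
  rw [MonoidalCategory.whiskerLeft_id, Category.id_comp] at h
  exact h

theorem doubleDualIso_hom_comp_rightAdjointMate_pairingHom (X : C) {f : X ⊗ X ⟶ 𝟙_ C}
    (hf : (β_ X X).hom ≫ f = f) :
    (doubleDualIso X).hom ≫ rightAdjointMate (pairingHom X f) = pairingHom X f := by
  apply rightDual_hom_ext
  rw [comp_whiskerRight, Category.assoc, rightAdjointMate_comp_evaluation,
    ← whisker_exchange_assoc, doubleDualIso_hom_whiskerRight_comp_evaluation,
    BraidedCategory.braiding_naturality_right_assoc,
    pairingHom_whiskerRight_comp_evaluation, hf]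

theorem isPerfectPairing_of_mono_pairingHom [Abelian C] [MonoidalPreadditive C] (X : C)
    {f : X ⊗ X ⟶ 𝟙_ C} (hf : (β_ X X).hom ≫ f = f) [Mono (pairingHom X f)] :
    IsPerfectPairing X f := by
  have : Epi (pairingHom X f) := by
    rw [← doubleDualIso_hom_comp_rightAdjointMate_pairingHom X hf]
    have := epi_rightAdjointMate_of_mono (pairingHom X f)
    exact epi_comp _ _
  exact isIso_of_mono_of_epi _

end Braided

end Duality

section Kernels

variable {C : Type*} [Category C] [Preadditive C] [HasKernels C]

theorem mono_of_kernelSubobject_eq_bot [HasZeroObject C] {X Y : C} {f : X ⟶ Y}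
    (hf : kernelSubobject f = ⊥) : Mono f :=
  Preadditive.mono_of_cancel_zero f fun g hg => by
    rw [← Subobject.bot_factors_iff_zero, ← hf]
    exact kernelSubobject_factors f g hg

theorem eq_zero_of_kernelSubobject_eq_top {X Y : C} {f : X ⟶ Y} (hf : kernelSubobject f = ⊤) :
    f = 0 := by
  have : IsIso (kernelSubobject f).arrow := (Subobject.isIso_arrow_iff_eq_top _).mpr hf
  rw [← cancel_epi (kernelSubobject f).arrow, kernelSubobject_arrow_comp, comp_zero]

end Kernels

section Algebra

variable {C : Type*} [Category C] [MonoidalCategory C]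

theorem MonObj.eq_zero_of_mul_comp_eq_zero [Preadditive C] [MonoidalPreadditive C] {M Z : C}
    [MonObj M] {lam : M ⟶ Z} (h : μ ≫ lam = 0) : lam = 0 := by
  calc lam = (λ_ M).inv ≫ (η ▷ M ≫ μ) ≫ lam := by rw [MonObj.one_mul, Iso.inv_hom_id_assoc]
    _ = 0 := by rw [Category.assoc, h, comp_zero, comp_zero]

theorem IsCommMonObj.whiskerLeft_comp_mul [BraidedCategory C] {M V Z : C} [MonObj M]
    [IsCommMonObj M] (g : V ⟶ M) (h : M ⟶ Z) :
    M ◁ g ≫ μ ≫ h = (β_ M V).hom ≫ g ▷ M ≫ μ ≫ h := by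
  rw [← BraidedCategory.braiding_naturality_right_assoc, IsCommMonObj.mul_comm_assoc]

variable [Abelian C] [MonoidalPreadditive C] [SymmetricCategory C] [RigidCategory C]

/-- `λ((a k) b) = λ(a (k b)) = λ((k b) a) = λ(k (b a))`, which vanishes when `λ(k -) = 0`. -/
theorem isIdeal_kernelSubobject_pairingHom (A : CommMon C) (lam : A.X ⟶ 𝟙_ C) :
    IsIdeal A (kernelSubobject (pairingHom A.X (μ ≫ lam))) := by
  set K := (kernelSubobject (pairingHom A.X (μ ≫ lam))).arrow
  have hK : K ▷ A.X ≫ μ ≫ lam = 0 :=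
    (comp_pairingHom_eq_zero_iff _ _).mp (kernelSubobject_arrow_comp _)
  apply kernelSubobject_factors
  rw [comp_pairingHom_eq_zero_iff]
  simp only [comp_whiskerRight, Category.assoc]
  rw [MonObj.mul_assoc_assoc, associator_naturality_middle_assoc,
    ← MonoidalCategory.whiskerLeft_comp_assoc, IsCommMonObj.whiskerLeft_comp_mul]
  simp only [comp_whiskerRight, Category.assoc]
  rw [MonObj.mul_assoc_assoc, associator_naturality_left_assoc, ← whisker_exchange_assoc, hK]
  simp only [comp_zero]

theorem mono_pairingHom_of_isSimpleAlgebra {A : CommMon C} (hA : IsSimpleAlgebra A)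
    {lam : A.X ⟶ 𝟙_ C} (hlam : lam ≠ 0) : Mono (pairingHom A.X (μ ≫ lam)) := by
  rcases hA.2 _ (isIdeal_kernelSubobject_pairingHom A lam) with hbot | htop
  · exact mono_of_kernelSubobject_eq_bot hbot
  · refine absurd (MonObj.eq_zero_of_mul_comp_eq_zero ?_) hlam
    rw [← pairingHom_whiskerRight_comp_evaluation A.X (μ ≫ lam),
      eq_zero_of_kernelSubobject_eq_top htop, MonoidalPreadditive.zero_whiskerRight, zero_comp]

end Algebra

theorem stmt_2_general
    {C : Type*} [Category C] [Abelian C]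
    [MonoidalCategory C] [MonoidalPreadditive C]
    [SymmetricCategory C] [RigidCategory C]
    (A : CommMon C) (hA : IsSimpleAlgebra A)
    (lam : A.X ⟶ 𝟙_ C) (hlam : lam ≠ 0) :
    IsPerfectPairing A.X (MonObj.mul (X := A.X) ≫ lam) := by
  have := mono_pairingHom_of_isSimpleAlgebra hA hlam
  exact isPerfectPairing_of_mono_pairingHom A.X (IsCommMonObj.mul_comm_assoc A.X lam)

/-- Let `A` be a simple algebra in a pre-Tannakian category over a field
`k`, and let `λ : A → 𝟙` be a nonzero morphism. Then the bilinear form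
`(·,·)_λ = λ ∘ μ : A ⊗ A ⟶ 𝟙` is perfect; that is, `(A, λ)` is a Frobenius algebra. -/
theorem stmt_2 {k : Type*} [Field k]
    {C : Type*} [Category C] [Abelian C] [Linear k C]
    [MonoidalCategory C] [MonoidalPreadditive C] [MonoidalLinear k C]
    [SymmetricCategory C] [RigidCategory C]
    (hlen : ∀ X : C, WellFoundedGT (Subobject X) ∧ WellFoundedLT (Subobject X))
    (hfin : ∀ X Y : C, FiniteDimensional k (X ⟶ Y))
    (hunit : Function.Bijective fun a : k => a • 𝟙 (𝟙_ C))
    (A : CommMon C) (hA : IsSimpleAlgebra A)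
    (lam : A.X ⟶ 𝟙_ C) (hlam : lam ≠ 0) :
    IsPerfectPairing A.X (MonObj.mul (X := A.X) ≫ lam) :=
  stmt_2_general A hA lam hlam
end

section
/- Let G be a group and U a subgroup of G such that the set U\G/U of double cosets is finite, with m elements. Then every strictly increasing chain of subgroups U = U₀ ⊊ U₁ ⊊ ⋯ ⊊ U_n ⊆ G satisfies n ≤ m. -/
/-!
A subgroup containing `U` is a union of `(U, U)`-double cosets, so passing from a subgroup to
the set of double cosets it contains turns the chain `U₀ ⊊ ⋯ ⊊ Uₙ` into a strict chain of
subsets of the `m`-element set `U\G/U`, whose cardinalities then strictly increase.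
-/

theorem Set.le_natCard_of_strictMono {α : Type*} [Finite α] {n : ℕ}
    {f : Fin (n + 1) → Set α} (hf : StrictMono f) : n ≤ Nat.card α := by
  have hcard := Finset.card_le_card_of_injOn (fun i ↦ (f i).ncard)
    (s := Finset.univ) (t := Finset.range (Nat.card α + 1))
    (fun i _ ↦ by simpa [Nat.lt_succ_iff] using Set.ncard_le_card (f i))
    (Set.ncard_strictMono.comp hf).injective.injOn
  simpa using hcard

namespace DoubleCoset

variable {G : Type*} [Group G] {H K L : Subgroup G}

theorem mk_mem_image_iff (hH : H ≤ L) (hK : K ≤ L) {g : G} :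
    mk H K g ∈ mk H K '' L ↔ g ∈ L := by
  refine ⟨?_, fun hg ↦ ⟨g, hg, rfl⟩⟩
  rintro ⟨l, hl, hlg⟩
  obtain ⟨h, hh, k, hk, rfl⟩ := (DoubleCoset.eq H K l g).mp hlg
  exact mul_mem (mul_mem (hH hh) hl) (hK hk)

theorem image_mk_ssubset_image_mk {L' : Subgroup G} (hH : H ≤ L) (hK : K ≤ L) (hL : L < L') :
    mk H K '' L ⊂ mk H K '' L' := by
  refine ⟨Set.image_mono hL.le, fun hsub ↦ ?_⟩
  obtain ⟨g, hg', hg⟩ := SetLike.exists_of_lt hL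
  exact hg ((mk_mem_image_iff hH hK).mp (hsub ⟨g, hg', rfl⟩))

end DoubleCoset

/-- Let `G` be a group and `U` a subgroup of `G` such that the set
`U\G/U` of double cosets is finite, with `m` elements. Then every strictly increasing
chain of subgroups `U = U₀ ⊊ U₁ ⊊ ⋯ ⊊ U_n ⊆ G` satisfies `n ≤ m`. -/
theorem stmt_10 {G : Type*} [Group G] (U : Subgroup G) (m : ℕ)
    (hfin : Nat.card (DoubleCoset.Quotient (U : Set G) (U : Set G)) = m)
    (hpos : Finite (DoubleCoset.Quotient (U : Set G) (U : Set G)))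
    (n : ℕ) (c : Fin (n + 1) → Subgroup G)
    (hc0 : c 0 = U) (hc : StrictMono c) :
    n ≤ m := by
  have hU : ∀ i, U ≤ c i := fun i ↦ hc0 ▸ hc.monotone (Fin.zero_le i)
  have hchain : StrictMono fun i ↦ DoubleCoset.mk U U '' c i := fun i j hij ↦
    DoubleCoset.image_mk_ssubset_image_mk (hU i) (hU i) (hc hij)
  exact hfin ▸ Set.le_natCard_of_strictMono hchain
end

section
/- Let G be a group, let U be a subgroup of G such that the set U\G/U of double cosets is finite, and let g ∈ G. If U ⊆ gUg⁻¹, then U = gUg⁻¹. -/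
/-!
If `U ≤ gUg⁻¹`, then `x ↦ g⁻¹ x g` maps `U`-double cosets into `U`-double cosets, so it induces a
self-map of `U\G/U`. This map is surjective, with `UxU` hit by `U(gxg⁻¹)U`, hence injective since
`U\G/U` is finite. For `w ∈ U`, the double cosets of `gwg⁻¹` and of `1` both map to `U`, so
`gwg⁻¹ ∈ U1U = U`.
-/

namespace DoubleCoset

variable {G : Type*} [Group G]

lemma conj_inv_mem_of_le_map_conj {H : Subgroup G} {g : G}
    (hH : H ≤ H.map (MulAut.conj g).toMonoidHom) {h : G} (hh : h ∈ H) : g⁻¹ * h * g ∈ H := by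
  obtain ⟨w, hw, rfl⟩ := hH hh
  simpa [mul_assoc] using hw

lemma mk_eq_mk_one_iff (H : Subgroup G) (a : G) : mk H H a = mk H H 1 ↔ a ∈ H := by
  rw [eq]
  constructor
  · rintro ⟨h, hh, k, hk, hone⟩
    rw [show a = h⁻¹ * (h * a * k) * k⁻¹ by group, ← hone, mul_one]
    exact H.mul_mem (H.inv_mem hh) (H.inv_mem hk)
  · intro ha
    exact ⟨a⁻¹, H.inv_mem ha, 1, H.one_mem, by group⟩

def conjInvMap {H K : Subgroup G} {g : G} (hH : H ≤ H.map (MulAut.conj g).toMonoidHom)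
    (hK : K ≤ K.map (MulAut.conj g).toMonoidHom) :
    Quotient (H : Set G) (K : Set G) → Quotient (H : Set G) (K : Set G) :=
  Quotient.map' (fun x => g⁻¹ * x * g) fun x y hxy => by
    rw [rel_iff] at hxy ⊢
    obtain ⟨a, ha, b, hb, rfl⟩ := hxy
    exact ⟨_, conj_inv_mem_of_le_map_conj hH ha, _, conj_inv_mem_of_le_map_conj hK hb, by group⟩

section conjInvMap

variable {H K : Subgroup G} {g : G} (hH : H ≤ H.map (MulAut.conj g).toMonoidHom)
  (hK : K ≤ K.map (MulAut.conj g).toMonoidHom)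

@[simp]
lemma conjInvMap_mk (x : G) : conjInvMap hH hK (mk H K x) = mk H K (g⁻¹ * x * g) :=
  rfl

lemma conjInvMap_surjective : Function.Surjective (conjInvMap hH hK) := by
  rintro ⟨x⟩
  exact ⟨mk H K (g * x * g⁻¹), by rw [conjInvMap_mk]; congr 1; group⟩

end conjInvMap

theorem eq_map_conj_of_le_map_conj {H : Subgroup G} [Finite (Quotient (H : Set G) (H : Set G))]
    {g : G} (hle : H ≤ H.map (MulAut.conj g).toMonoidHom) :
    H = H.map (MulAut.conj g).toMonoidHom := by
  have hinj : Function.Injective (conjInvMap hle hle) :=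
    Finite.injective_iff_surjective.2 (conjInvMap_surjective hle hle)
  refine le_antisymm hle ?_
  rintro _ ⟨w, hw, rfl⟩
  have hcoset : mk H H (g * w * g⁻¹) = mk H H 1 := hinj <| by
    simpa [mul_assoc, mk_eq_mk_one_iff] using hw
  simpa using (mk_eq_mk_one_iff H _).1 hcoset

end DoubleCoset

/-- Let `G` be a group, let `U` be a subgroup of `G` such that the set
`U\G/U` of double cosets is finite, and let `g ∈ G`. If `U ⊆ gUg⁻¹`, then `U = gUg⁻¹`. -/
theorem stmt_11 {G : Type*} [Group G] (U : Subgroup G)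
    (hfin : Finite (DoubleCoset.Quotient (U : Set G) (U : Set G)))
    (g : G) (hle : U ≤ Subgroup.map (MulAut.conj g).toMonoidHom U) :
    U = Subgroup.map (MulAut.conj g).toMonoidHom U :=
  DoubleCoset.eq_map_conj_of_le_map_conj hle
end

section
/- Let G be a topological group such that for every open subgroup U of G, the double coset space U\G/U is finite and the normalizer N_G(U) equals U. Let H be any topological group, and let W be an open subgroup of G × H (with the product topology). Then W = U × V, where U = {g ∈ G : (g, 1) ∈ W} and V = {h ∈ H : (1, h) ∈ W}; in particular, every open subgroup of G × H is a product of an open subgroup of G and an open subgroup of H. -/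
/-!
Write `U = {g | (g, 1) ∈ W}`. Conjugating `(u, 1)` by `(g, h) ∈ W` gives `(g u g⁻¹, 1)`, so the
first coordinate of every element of `W` normalizes `U`. As `U` is open, it is self-normalizing,
hence `(g, 1) ∈ W` and then `(1, h) ∈ W` for every `(g, h) ∈ W`, which splits `W` as a product.
-/

namespace Subgroup

variable {G H : Type*} [Group G] [Group H]

theorem map_fst_le_normalizer_comap_inl (W : Subgroup (G × H)) :
    W.map (MonoidHom.fst G H) ≤ normalizer (W.comap (MonoidHom.inl G H) : Set G) := by
  rintro _ ⟨p, hp, rfl⟩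
  rw [mem_normalizer_iff]
  intro u
  have conj : p * (u, 1) * p⁻¹ = (p.1 * u * p.1⁻¹, 1) := by ext <;> simp
  simp only [mem_comap, MonoidHom.inl_apply, MonoidHom.coe_fst, ← conj]
  exact ((W.mul_mem_cancel_right (W.inv_mem hp)).trans (W.mul_mem_cancel_left hp)).symm

theorem eq_prod_of_map_fst_le_comap_inl {W : Subgroup (G × H)}
    (hW : W.map (MonoidHom.fst G H) ≤ W.comap (MonoidHom.inl G H)) :
    W = (W.comap (MonoidHom.inl G H)).prod (W.comap (MonoidHom.inr G H)) := by
  refine le_antisymm (le_prod_iff.2 ⟨hW, ?_⟩) (prod_le_iff.2 ⟨map_comap_le _ _, map_comap_le _ _⟩)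
  rintro _ ⟨p, hp, rfl⟩
  have hp₁ : (p.1, (1 : H)) ∈ W := hW ⟨p, hp, rfl⟩
  have : (p.1, (1 : H))⁻¹ * p = (1, p.2) := by ext <;> simp
  show (1, p.2) ∈ W
  exact this ▸ W.mul_mem (W.inv_mem hp₁) hp

end Subgroup

/-- Let `G` be a topological group such that for every open subgroup `U`
of `G`, the double coset space `U\G/U` is finite and the normalizer `N_G(U)` equals `U`.
Let `H` be any topological group, and let `W` be an open subgroup of `G × H`. Then
`W = U × V`, where `U = {g : (g,1) ∈ W}` and `V = {h : (1,h) ∈ W}`; in particular `U` and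
`V` are open, so every open subgroup of `G × H` is a product of open subgroups. -/
theorem stmt_12 {G : Type*} [Group G] [TopologicalSpace G] [IsTopologicalGroup G]
    {H : Type*} [Group H] [TopologicalSpace H] [IsTopologicalGroup H]
    (hG : ∀ U : Subgroup G, IsOpen (U : Set G) →
      Finite (DoubleCoset.Quotient (U : Set G) (U : Set G)) ∧ Subgroup.normalizer (U : Set G) = U)
    (W : Subgroup (G × H)) (hW : IsOpen (W : Set (G × H))) :
    W = (W.comap (MonoidHom.inl G H)).prod (W.comap (MonoidHom.inr G H)) ∧
      IsOpen ((W.comap (MonoidHom.inl G H) : Subgroup G) : Set G) ∧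
      IsOpen ((W.comap (MonoidHom.inr G H) : Subgroup H) : Set H) := by
  have hU : IsOpen ((W.comap (MonoidHom.inl G H) : Subgroup G) : Set G) :=
    hW.preimage (continuous_id.prodMk continuous_const)
  have hV : IsOpen ((W.comap (MonoidHom.inr G H) : Subgroup H) : Set H) :=
    hW.preimage (continuous_const.prodMk continuous_id)
  have hfst := W.map_fst_le_normalizer_comap_inl
  rw [(hG _ hU).2] at hfst
  exact ⟨Subgroup.eq_prod_of_map_fst_le_comap_inl hfst, hU, hV⟩
end

section
/- Let G be a topological group such that every open subgroup of G × G (with the product topology) is of the form U × V for some open subgroups U, V of G. Then every open subgroup of G equals its own normalizer. -/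
/-!
For an open subgroup `U` with normalizer `N`, the pairs `(g, h)` of `N × N` with `gU = hU` form a
subgroup of `G × G`; it contains `U × U`, hence is open, and it contains the diagonal of `N`.
If it is a product `A × B`, then `N ≤ A` and `1 ∈ B`, so `(n, 1)` lies in it for every `n ∈ N`,
i.e. `n ∈ U`.
-/

namespace Subgroup

variable {G : Type*} [Group G]

def cosetDiagonal (U : Subgroup G) : Subgroup (G × G) where
  carrier := {p | p.1 ∈ normalizer (U : Set G) ∧ p.1⁻¹ * p.2 ∈ U}
  one_mem' := ⟨one_mem _, by simp⟩
  mul_mem' := by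
    rintro ⟨g, h⟩ ⟨g', h'⟩ ⟨hg, hgh⟩ ⟨hg', hgh'⟩
    refine ⟨mul_mem hg hg', ?_⟩
    have hconj : g'⁻¹ * (g⁻¹ * h) * g' ∈ U := (mem_normalizer_iff''.mp hg' _).mp hgh
    change (g * g')⁻¹ * (h * h') ∈ U
    have : (g * g')⁻¹ * (h * h') = g'⁻¹ * (g⁻¹ * h) * g' * (g'⁻¹ * h') := by group
    rw [this]
    exact mul_mem hconj hgh'
  inv_mem' := by
    rintro ⟨g, h⟩ ⟨hg, hgh⟩
    refine ⟨inv_mem hg, ?_⟩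
    change g⁻¹⁻¹ * h⁻¹ ∈ U
    have : g⁻¹⁻¹ * h⁻¹ = g * (g⁻¹ * h)⁻¹ * g⁻¹ := by group
    rw [this]
    exact (mem_normalizer_iff.mp hg _).mp (inv_mem hgh)

variable {U : Subgroup G}

theorem mem_cosetDiagonal {p : G × G} :
    p ∈ U.cosetDiagonal ↔ p.1 ∈ normalizer (U : Set G) ∧ p.1⁻¹ * p.2 ∈ U :=
  Iff.rfl

theorem prod_le_cosetDiagonal : U.prod U ≤ U.cosetDiagonal := fun _ hp ↦
  ⟨le_normalizer hp.1, mul_mem (inv_mem hp.1) hp.2⟩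

theorem mk_mem_cosetDiagonal {g : G} (hg : g ∈ normalizer (U : Set G)) :
    (g, g) ∈ U.cosetDiagonal :=
  ⟨hg, by simp⟩

theorem normalizer_eq_self_of_cosetDiagonal_eq_prod {A B : Subgroup G}
    (hAB : U.cosetDiagonal = A.prod B) : normalizer (U : Set G) = U := by
  refine le_antisymm (fun n hn ↦ ?_) le_normalizer
  have hnn : (n, n) ∈ A.prod B := hAB ▸ mk_mem_cosetDiagonal hn
  have hn1 : (n, (1 : G)) ∈ U.cosetDiagonal := hAB ▸ ⟨hnn.1, B.one_mem⟩
  simpa using inv_mem (mem_cosetDiagonal.mp hn1).2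

theorem isOpen_cosetDiagonal [TopologicalSpace G] [ContinuousMul G] (hU : IsOpen (U : Set G)) :
    IsOpen (U.cosetDiagonal : Set (G × G)) :=
  isOpen_mono prod_le_cosetDiagonal (hU.prod hU)

end Subgroup

/-- Let `G` be a topological group such that every open subgroup of
`G × G` (with the product topology) is of the form `U × V` for some open subgroups
`U, V` of `G`. Then every open subgroup of `G` equals its own normalizer. -/
theorem stmt_13 {G : Type*} [Group G] [TopologicalSpace G] [IsTopologicalGroup G]
    (h : ∀ W : Subgroup (G × G), IsOpen (W : Set (G × G)) →
      ∃ U V : Subgroup G, IsOpen (U : Set G) ∧ IsOpen (V : Set G) ∧ W = U.prod V) :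
    ∀ U : Subgroup G, IsOpen (U : Set G) → Subgroup.normalizer (U : Set G) = U := by
  intro U hU
  obtain ⟨A, B, -, -, hAB⟩ := h _ (Subgroup.isOpen_cosetDiagonal hU)
  exact Subgroup.normalizer_eq_self_of_cosetDiagonal_eq_prod hAB
end

section
/- Let G be a topological group such that the double coset space U\G/U is finite for every open subgroup U of G. Then the following are equivalent: (i) every open subgroup of G equals its own normalizer; (ii) whenever V ⊆ U are open subgroups of G with V of finite index in U, one has V = U. -/
/-! If `V` has finite index in `U`, the core of `V` in `U` (the intersection of the finitely
many `U`-conjugates of `V`) is an open subgroup normalized by `U`; if it is self-normalizing,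
`U` lies inside it and hence inside `V`. Conversely, for `n` in the normalizer of `U` the double
coset `UnU` is the left coset `nU`, so `N(U)/U` embeds into the finite set `U\G/U`; then
`U = N(U)`, since `N(U)` is open. -/

namespace Subgroup

variable {G : Type*} [Group G]

theorem doubleCoset_mk_eq_mk_iff_of_mem_normalizer {U : Subgroup G} {a : G}
    (ha : a ∈ normalizer (U : Set G)) (b : G) :
    DoubleCoset.mk U U a = DoubleCoset.mk U U b ↔ a⁻¹ * b ∈ U := by
  rw [DoubleCoset.eq]
  constructor
  · rintro ⟨h, hh, k, hk, rfl⟩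
    have hconj : a⁻¹ * h * a ∈ U := (mem_normalizer_iff''.mp ha h).mp hh
    simpa only [mul_assoc] using U.mul_mem hconj hk
  · exact fun hab => ⟨1, U.one_mem, a⁻¹ * b, hab, by group⟩

theorem relIndex_normalizer_ne_zero (U : Subgroup G)
    [Finite (DoubleCoset.Quotient (U : Set G) U)] :
    U.relIndex (normalizer (U : Set G)) ≠ 0 := by
  let φ : normalizer (U : Set G) ⧸ U.subgroupOf (normalizer (U : Set G)) →
      DoubleCoset.Quotient (U : Set G) U :=
    Quotient.lift (fun n => DoubleCoset.mk U U n) fun a b hab =>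
      (doubleCoset_mk_eq_mk_iff_of_mem_normalizer a.2 b).2
        (QuotientGroup.leftRel_apply.mp hab : a⁻¹ * b ∈ U.subgroupOf _)
  have hφ : Function.Injective φ := by
    rintro ⟨a⟩ ⟨b⟩ h
    exact QuotientGroup.eq.mpr ((doubleCoset_mk_eq_mk_iff_of_mem_normalizer a.2 b).1 h)
  have := Finite.of_injective φ hφ
  exact index_ne_zero_of_finite

variable [TopologicalSpace G] [IsTopologicalGroup G]

theorem isOpen_normalCore (H : Subgroup G) [H.FiniteIndex] (hH : IsOpen (H : Set G)) :
    IsOpen (H.normalCore : Set G) :=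
  H.normalCore.isOpen_of_isClosed_of_finiteIndex (H.normalCore_isClosed (H.isClosed_of_isOpen hH))

theorem exists_isOpen_le_le_normalizer {U V : Subgroup G} (hU : IsOpen (U : Set G))
    (hV : IsOpen (V : Set G)) (hVU : V.relIndex U ≠ 0) :
    ∃ W : Subgroup G, IsOpen (W : Set G) ∧ W ≤ V ∧ U ≤ normalizer (W : Set G) := by
  have : (V.subgroupOf U).FiniteIndex := ⟨hVU⟩
  have hVU_open : IsOpen (V.subgroupOf U : Set ↥U) := hV.preimage continuous_subtype_val
  refine ⟨(V.subgroupOf U).normalCore.map U.subtype, ?_, ?_, ?_⟩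
  · rw [coe_map]
    exact hU.isOpenMap_subtype_val _ ((V.subgroupOf U).isOpen_normalCore hVU_open)
  · exact map_le_iff_le_comap.mpr (normalCore_le _)
  · calc U = (⊤ : Subgroup U).map U.subtype := by rw [← MonoidHom.range_eq_map, range_subtype]
      _ = (normalizer ((V.subgroupOf U).normalCore : Set U)).map U.subtype := by
        rw [normalizer_eq_top]
      _ ≤ _ := le_normalizer_map _

end Subgroup

open Subgroup in
/-- Let `G` be a topological group such that the double coset space
`U\G/U` is finite for every open subgroup `U` of `G`. Then the following are equivalent:
(i) every open subgroup of `G` equals its own normalizer; (ii) whenever `V ⊆ U` are open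
subgroups of `G` with `V` of finite index in `U`, one has `V = U`. -/
theorem stmt_14 {G : Type*} [Group G] [TopologicalSpace G] [IsTopologicalGroup G]
    (hG : ∀ U : Subgroup G, IsOpen (U : Set G) →
      Finite (DoubleCoset.Quotient (U : Set G) (U : Set G))) :
    (∀ U : Subgroup G, IsOpen (U : Set G) → Subgroup.normalizer (U : Set G) = U) ↔
      (∀ U V : Subgroup G, IsOpen (U : Set G) → IsOpen (V : Set G) →
        V ≤ U → V.relIndex U ≠ 0 → V = U) := by
  constructor
  · intro hself U V hU hV hVU hrel
    obtain ⟨W, hW, hWV, hUW⟩ := exists_isOpen_le_le_normalizer hU hV hrel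
    exact le_antisymm hVU (hUW.trans ((hself W hW).le.trans hWV))
  · intro hfinite U hU
    have := hG U hU
    exact (hfinite _ U (U.isOpen_mono le_normalizer hU) hU le_normalizer
      (relIndex_normalizer_ne_zero U)).symm
end

section
/- Let L and K be pro-oligomorphic groups and let Θ : S(L) → S(K) be an exact atomic functor. Let X be an object of S(L), let Z be an object of S(K), and let f : Θ(X) → Z be a surjective morphism in S(K). Then there exist an object Y of S(L), a surjective morphism X → Y in S(L), and an isomorphism Θ(Y) ≅ Z in S(K). -/
/-!
Let `W = X × X`. Since `Θ` preserves finite products, `Θ W = Θ X × Θ X` (as sets, `K` being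
Roelcke precompact), so the kernel pair of `f` is a `K`-stable subset `R` of `Θ W`. As `Θ`
preserves the decomposition of an `L`-set into its orbits and sends orbits to orbits, `R` is the
image of `Θ A` for a union `A ⊆ W` of orbits. Take `Y` to be the coequalizer `X / A` of the two
projections `A ⇉ X`. Since `Θ` preserves coequalizers, `Θ Y` is the coequalizer of
`Θ A ⇉ Θ X`, and so is `Z`: `f` is surjective and identifies exactly the pairs in `R`.
-/

open CategoryTheory

/-- A finitary smooth `G`-set for a topological group `G`: a `G`-action such that every
point stabilizer is open and there are finitely many orbits. -/
structure SmGSet (G : Type) [Group G] [TopologicalSpace G] : Type 1 where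
  /-- the underlying set -/
  α : Type
  /-- the action -/
  smul : G → α → α
  one_smul : ∀ x, smul 1 x = x
  mul_smul : ∀ g h x, smul (g * h) x = smul g (smul h x)
  /-- smoothness: every point stabilizer is an open subgroup -/
  smooth : ∀ x : α, IsOpen {g : G | smul g x = x}
  /-- finitarity: there are finitely many orbits -/
  finitary : Finite (Quot fun x y : α => ∃ g : G, smul g x = y)

namespace SmGSet

variable {G : Type} [Group G] [TopologicalSpace G]

/-- Morphisms of `G`-sets: equivariant maps. -/
@[ext]
structure SmHom (X Y : SmGSet G) where
  toFun : X.α → Y.α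
  equivariant : ∀ (g : G) (x : X.α), toFun (X.smul g x) = Y.smul g (toFun x)

/-- The category `S(G)` of finitary smooth `G`-sets. -/
instance : Category (SmGSet G) where
  Hom := SmHom
  id X := ⟨fun x => x, fun _ _ => rfl⟩
  comp f g := ⟨fun x => g.toFun (f.toFun x), fun a x => by
    try dsimp only
    rw [f.equivariant, g.equivariant]⟩

/-- A `G`-set is transitive if it is nonempty and has a single orbit. -/
def IsTransitive (X : SmGSet G) : Prop :=
  Nonempty X.α ∧ ∀ x y : X.α, ∃ g : G, X.smul g x = y

/-- The orbit equivalence relation is an equivalence. -/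
theorem orbRel_equiv (X : SmGSet G) :
    Equivalence fun x y : X.α => ∃ g : G, X.smul g x = y := by
  constructor
  · intro x; exact ⟨1, X.one_smul x⟩
  · rintro x y ⟨g, rfl⟩
    exact ⟨g⁻¹, by rw [← X.mul_smul, inv_mul_cancel, X.one_smul]⟩
  · rintro x y z ⟨g, rfl⟩ ⟨h, rfl⟩
    exact ⟨h * g, X.mul_smul h g x⟩

/-- A finitary `G`-set admits a finite orbit transversal. -/
theorem exists_transversal (X : SmGSet G) :
    ∃ S : Set X.α, S.Finite ∧ ∀ x : X.α, ∃ s ∈ S, ∃ g : G, X.smul g s = x := by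
  haveI := X.finitary
  refine ⟨Set.range (fun q : Quot fun x y : X.α => ∃ g : G, X.smul g x = y => q.out),
    Set.finite_range _, fun x => ?_⟩
  refine ⟨(Quot.mk _ x).out, ⟨_, rfl⟩, ?_⟩
  have h : Quot.mk _ (Quot.mk (fun x y : X.α => ∃ g : G, X.smul g x = y) x).out
      = Quot.mk _ x := Quot.out_eq _
  exact (X.orbRel_equiv.eqvGen_iff).mp (Quot.eq.mp h)

/-- The stabilizer of a point, as a subgroup. -/
def stab (X : SmGSet G) (x : X.α) : Subgroup G where
  carrier := {g | X.smul g x = x}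
  one_mem' := X.one_smul x
  mul_mem' := by
    intro a b ha hb
    simp only [Set.mem_setOf_eq] at *
    rw [X.mul_smul, hb, ha]
  inv_mem' := by
    intro a ha
    simp only [Set.mem_setOf_eq] at *
    have h : X.smul a⁻¹ (X.smul a x) = x := by
      rw [← X.mul_smul, inv_mul_cancel, X.one_smul]
    rwa [ha] at h

theorem stab_isOpen (X : SmGSet G) (x : X.α) : IsOpen ((X.stab x : Subgroup G) : Set G) :=
  X.smooth x

end SmGSet

namespace SmGSet

variable {G : Type} [Group G] [TopologicalSpace G]

/-- The external product of a `G`-set and an `H`-set, as a `(G × H)`-set. -/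
def eprod {H : Type} [Group H] [TopologicalSpace H]
    (X : SmGSet G) (Y : SmGSet H) : SmGSet (G × H) where
  α := X.α × Y.α
  smul p q := (X.smul p.1 q.1, Y.smul p.2 q.2)
  one_smul q := by
    have h1 : X.smul 1 q.1 = q.1 := X.one_smul q.1
    have h2 : Y.smul 1 q.2 = q.2 := Y.one_smul q.2
    simp [h1, h2]
  mul_smul p p' q := by
    have h1 : X.smul (p.1 * p'.1) q.1 = X.smul p.1 (X.smul p'.1 q.1) := X.mul_smul _ _ _
    have h2 : Y.smul (p.2 * p'.2) q.2 = Y.smul p.2 (Y.smul p'.2 q.2) := Y.mul_smul _ _ _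
    simp [Prod.mul_def, h1, h2]
  smooth q := by
    have h : {p : G × H | (X.smul p.1 q.1, Y.smul p.2 q.2) = q} =
        {g : G | X.smul g q.1 = q.1} ×ˢ {h : H | Y.smul h q.2 = q.2} := by
      ext p
      simp only [Set.mem_setOf_eq, Set.mem_prod, Prod.ext_iff]
    rw [h]
    exact (X.smooth q.1).prod (Y.smooth q.2)
  finitary := by
    obtain ⟨SX, hSXfin, hSX⟩ := X.exists_transversal
    obtain ⟨SY, hSYfin, hSY⟩ := Y.exists_transversal
    haveI := hSXfin.to_subtype
    haveI := hSYfin.to_subtype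
    refine Finite.of_surjective
      (fun w : SX × SY => Quot.mk _ ((w.1 : X.α), (w.2 : Y.α))) fun z => ?_
    obtain ⟨⟨x, y⟩, rfl⟩ := Quot.exists_rep z
    obtain ⟨s, hs, g, hg⟩ := hSX x
    obtain ⟨t, ht, h, hh⟩ := hSY y
    exact ⟨⟨⟨s, hs⟩, ⟨t, ht⟩⟩, Quot.sound ⟨(g, h), by simp [hg, hh]⟩⟩

/-- The (diagonal) product of two `G`-sets in `S(G)`, for `G` Roelcke precompact.
This is the categorical product in `S(G)`, computed on underlying sets. -/
noncomputable def dprod (X Y : SmGSet G)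
    (hroelcke : ∀ U V : Subgroup G, IsOpen (U : Set G) → IsOpen (V : Set G) →
      Finite (DoubleCoset.Quotient (U : Set G) (V : Set G))) : SmGSet G where
  α := X.α × Y.α
  smul g p := (X.smul g p.1, Y.smul g p.2)
  one_smul p := by
    have h1 : X.smul 1 p.1 = p.1 := X.one_smul p.1
    have h2 : Y.smul 1 p.2 = p.2 := Y.one_smul p.2
    simp [h1, h2]
  mul_smul g h p := by
    have h1 : X.smul (g * h) p.1 = X.smul g (X.smul h p.1) := X.mul_smul _ _ _
    have h2 : Y.smul (g * h) p.2 = Y.smul g (Y.smul h p.2) := Y.mul_smul _ _ _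
    simp [h1, h2]
  smooth p := by
    have h : {g : G | (X.smul g p.1, Y.smul g p.2) = p} =
        {g : G | X.smul g p.1 = p.1} ∩ {g : G | Y.smul g p.2 = p.2} := by
      ext g
      simp only [Set.mem_setOf_eq, Set.mem_inter_iff, Prod.ext_iff]
    rw [h]
    exact (X.smooth p.1).inter (Y.smooth p.2)
  finitary := by
    obtain ⟨SX, hSXfin, hSX⟩ := X.exists_transversal
    obtain ⟨SY, hSYfin, hSY⟩ := Y.exists_transversal
    haveI := hSXfin.to_subtype
    haveI := hSYfin.to_subtype
    haveI : ∀ (s : SX) (t : SY),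
        Finite (DoubleCoset.Quotient ((X.stab (s : X.α) : Subgroup G) : Set G)
          ((Y.stab (t : Y.α) : Subgroup G) : Set G)) :=
      fun s t => hroelcke _ _ (X.stab_isOpen _) (Y.stab_isOpen _)
    refine Finite.of_surjective
      (fun w : Σ (s : SX) (t : SY),
          DoubleCoset.Quotient ((X.stab (s : X.α) : Subgroup G) : Set G)
            ((Y.stab (t : Y.α) : Subgroup G) : Set G) =>
        Quot.mk _ ((w.1 : X.α), Y.smul w.2.2.out (w.2.1 : Y.α))) fun z => ?_
    obtain ⟨⟨x, y⟩, rfl⟩ := Quot.exists_rep z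
    obtain ⟨s, hs, g, hgx⟩ := hSX x
    obtain ⟨t, ht, h, hhy⟩ := hSY (Y.smul g⁻¹ y)
    refine ⟨⟨⟨s, hs⟩, ⟨t, ht⟩, DoubleCoset.mk (X.stab s) (Y.stab t) h⟩, ?_⟩
    set r := (DoubleCoset.mk (X.stab s) (Y.stab t) h).out with hr
    have hout : DoubleCoset.mk (X.stab s) (Y.stab t) r = DoubleCoset.mk (X.stab s) (Y.stab t) h := by
      rw [hr]; exact Quotient.out_eq' _
    obtain ⟨u, hu, v, hv, huv⟩ := DoubleCoset.rel_iff.mp (Quotient.eq''.mp hout)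
    have hu' : X.smul u s = s := hu
    have hv' : Y.smul v t = t := hv
    have hxs : X.smul (g * u) s = x := by
      rw [X.mul_smul, hu', hgx]
    have hys : Y.smul (g * u) (Y.smul r t) = y := by
      have hassoc : g * u * r * v = g * h := by rw [huv]; group
      calc Y.smul (g * u) (Y.smul r t)
          = Y.smul (g * u * r) t := (Y.mul_smul (g * u) r t).symm
        _ = Y.smul (g * u * r) (Y.smul v t) := by rw [hv']
        _ = Y.smul (g * u * r * v) t := (Y.mul_smul (g * u * r) v t).symm
        _ = Y.smul (g * h) t := by rw [hassoc]
        _ = Y.smul g (Y.smul h t) := Y.mul_smul g h t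
        _ = Y.smul g (Y.smul g⁻¹ y) := by rw [hhy]
        _ = y := by rw [← Y.mul_smul, mul_inv_cancel, Y.one_smul]
    exact Quot.sound ⟨g * u, by dsimp only; rw [hxs, hys]⟩

end SmGSet

/-- A topological group is pro-oligomorphic if it is Hausdorff, non-archimedean (open
subgroups form a neighborhood basis of the identity), and Roelcke precompact (`U\G/V`
is finite for all open subgroups `U`, `V`). -/
structure IsProOligomorphic (G : Type) [Group G] [TopologicalSpace G]
    [IsTopologicalGroup G] : Prop where
  t2 : T2Space G
  nonarch : ∀ s ∈ nhds (1 : G), ∃ U : Subgroup G, IsOpen (U : Set G) ∧ (U : Set G) ⊆ s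
  roelcke : ∀ U V : Subgroup G, IsOpen (U : Set G) → IsOpen (V : Set G) →
    Finite (DoubleCoset.Quotient (U : Set G) (V : Set G))

def IsRoelckePrecompact (G : Type) [Group G] [TopologicalSpace G] : Prop :=
  ∀ U V : Subgroup G, IsOpen (U : Set G) → IsOpen (V : Set G) →
    Finite (DoubleCoset.Quotient (U : Set G) (V : Set G))

open scoped Pointwise in
theorem isOpen_of_forall_mul_mem {G : Type} [Group G] [TopologicalSpace G]
    [ContinuousConstSMul G G] {U : Set G} {H : Subgroup G} (hH : IsOpen (H : Set G))
    (hU : ∀ g ∈ U, ∀ h ∈ H, g * h ∈ U) : IsOpen U := by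
  have hUH : U * (H : Set G) = U := by
    refine (Set.subset_mul_left U H.one_mem).antisymm' ?_
    rintro _ ⟨g, hg, h, hh, rfl⟩
    exact hU g hg h hh
  exact hUH ▸ hH.mul_left

namespace SmGSet

open Limits

variable {G : Type} [Group G] [TopologicalSpace G]

@[ext]
theorem hom_ext {X Y : SmGSet G} {f g : X ⟶ Y} (h : ∀ x, f.toFun x = g.toFun x) : f = g :=
  SmHom.ext (funext h)

@[simp]
theorem comp_toFun {X Y Z : SmGSet G} (f : X ⟶ Y) (g : Y ⟶ Z) (x : X.α) :
    (f ≫ g).toFun x = g.toFun (f.toFun x) :=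
  rfl

theorem exists_smul_eq_of_mk_eq (X : SmGSet G) {x y : X.α}
    (h : Quot.mk (fun x y : X.α => ∃ g : G, X.smul g x = y) x = Quot.mk _ y) :
    ∃ g : G, X.smul g x = y :=
  X.orbRel_equiv.eqvGen_iff.mp (Quot.eq.mp h)

section Sub

variable (X : SmGSet G) (S : Set X.α) (hS : ∀ g : G, ∀ x ∈ S, X.smul g x ∈ S)

def sub : SmGSet G where
  α := S
  smul g x := ⟨X.smul g x, hS g x x.2⟩
  one_smul x := Subtype.ext (X.one_smul x)
  mul_smul g h x := Subtype.ext (X.mul_smul g h x)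
  smooth x := by simpa only [Subtype.ext_iff] using X.smooth x
  finitary := by
    have := X.finitary
    refine Finite.of_injective
      (Quot.map (ra := fun x y : S => ∃ g : G, (⟨X.smul g x, hS g x x.2⟩ : S) = y)
        (rb := fun x y : X.α => ∃ g : G, X.smul g x = y) Subtype.val
        fun _ _ ⟨g, hg⟩ => ⟨g, congrArg Subtype.val hg⟩) ?_
    refine Quot.ind fun x => Quot.ind fun y h => ?_
    obtain ⟨g, hg⟩ := X.exists_smul_eq_of_mk_eq h
    exact Quot.sound ⟨g, Subtype.ext hg⟩

def subι : X.sub S hS ⟶ X :=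
  ⟨Subtype.val, fun _ _ => rfl⟩

end Sub

abbrev Orbits (X : SmGSet G) : Type :=
  Quot fun x y : X.α => ∃ g : G, X.smul g x = y

section Orbit

variable (X : SmGSet G) (j : X.Orbits)

def orbitSet : Set X.α :=
  {x | Quot.mk _ x = j}

theorem smul_mem_orbitSet : ∀ g : G, ∀ x ∈ X.orbitSet j, X.smul g x ∈ X.orbitSet j :=
  fun g _ hx => (Quot.sound ⟨g, rfl⟩).symm.trans hx

def orbit : SmGSet G :=
  X.sub (X.orbitSet j) (X.smul_mem_orbitSet j)

def orbitι : X.orbit j ⟶ X :=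
  X.subι _ _

theorem isTransitive_orbit : IsTransitive (X.orbit j) :=
  ⟨⟨⟨j.out, Quot.out_eq j⟩⟩, fun x y => by
    obtain ⟨g, hg⟩ := X.exists_smul_eq_of_mk_eq (x.2.trans y.2.symm)
    exact ⟨g, Subtype.ext hg⟩⟩

end Orbit

theorem inj_mk_toFun_eq {X : SmGSet G} (t : Cofan X.orbit) {j : X.Orbits} {x : X.α}
    (hx : x ∈ X.orbitSet j) :
    (t.inj (Quot.mk _ x)).toFun ⟨x, rfl⟩ = (t.inj j).toFun ⟨x, hx⟩ := by
  obtain rfl : Quot.mk _ x = j := hx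
  rfl

def isColimitOrbitCofan (X : SmGSet G) : IsColimit (Cofan.mk X X.orbitι) := by
  refine Cofan.IsColimit.mk _
    (fun t => ⟨fun x => (t.inj (Quot.mk _ x)).toFun ⟨x, rfl⟩, fun g x => ?_⟩) ?_ ?_
  · exact (inj_mk_toFun_eq t (X.smul_mem_orbitSet _ g x rfl)).trans
      ((t.inj _).equivariant g ⟨x, rfl⟩)
  · intro t j
    ext x
    exact inj_mk_toFun_eq t x.2
  · intro t m hm
    ext x
    exact congrArg (fun m => m.toFun ⟨x, rfl⟩) (hm (Quot.mk _ x))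

theorem Cofan.exists_inj_eq {J : Type} {F : J → SmGSet G} {c : Cofan F} (hc : IsColimit c)
    (z : c.pt.α) : ∃ j t, (c.inj j).toFun t = z := by
  let S : Set c.pt.α := ⋃ j, Set.range (c.inj j).toFun
  have hS : ∀ g : G, ∀ z ∈ S, c.pt.smul g z ∈ S := by
    simp only [S, Set.mem_iUnion, Set.mem_range]
    rintro g _ ⟨j, t, rfl⟩
    exact ⟨j, (F j).smul g t, (c.inj j).equivariant g t⟩
  let r : c.pt ⟶ c.pt.sub S hS := Cofan.IsColimit.desc hc fun j =>
    ⟨fun t => ⟨(c.inj j).toFun t, Set.mem_iUnion.2 ⟨j, t, rfl⟩⟩,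
      fun g t => Subtype.ext ((c.inj j).equivariant g t)⟩
  have hr : r ≫ c.pt.subι S hS = 𝟙 _ :=
    Cofan.IsColimit.hom_ext hc _ _ fun j => by
      rw [← Category.assoc, Cofan.IsColimit.fac]
      rfl
  have hz : (r.toFun z).1 = z := congrArg (fun m : c.pt ⟶ c.pt => m.toFun z) hr
  simpa only [S, hz, Set.mem_iUnion, Set.mem_range] using (r.toFun z).2

section Product

variable (X Y : SmGSet G) (hG : IsRoelckePrecompact G)

noncomputable def dprodFst : X.dprod Y hG ⟶ X :=
  ⟨Prod.fst, fun _ _ => rfl⟩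

noncomputable def dprodSnd : X.dprod Y hG ⟶ Y :=
  ⟨Prod.snd, fun _ _ => rfl⟩

noncomputable def isLimitDprod : IsLimit (BinaryFan.mk (dprodFst X Y hG) (dprodSnd X Y hG)) :=
  BinaryFan.isLimitMk
    (fun s => ⟨fun x => (s.fst.toFun x, s.snd.toFun x),
      fun g x => Prod.ext (s.fst.equivariant g x) (s.snd.equivariant g x)⟩)
    (fun _ => rfl) (fun _ => rfl)
    (fun _ _ h₁ h₂ => by
      ext x
      exact Prod.ext (congrArg (fun m => m.toFun x) h₁) (congrArg (fun m => m.toFun x) h₂))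

end Product

theorem BinaryFan.exists_fst_snd_eq {X Y : SmGSet G} (hG : IsRoelckePrecompact G)
    {c : BinaryFan X Y} (hc : IsLimit c) (x : X.α) (y : Y.α) :
    ∃ w, c.fst.toFun w = x ∧ c.snd.toFun w = y := by
  obtain ⟨l, hl₁, hl₂⟩ := BinaryFan.IsLimit.lift' hc (dprodFst X Y hG) (dprodSnd X Y hG)
  exact ⟨l.toFun (x, y), congrArg (fun m => m.toFun (x, y)) hl₁,
    congrArg (fun m => m.toFun (x, y)) hl₂⟩

section Coequalizer

variable {A X : SmGSet G} (a b : A ⟶ X)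

def coeqRel : X.α → X.α → Prop :=
  fun x y => ∃ t, a.toFun t = x ∧ b.toFun t = y

theorem coeqRel_smul {x y : X.α} (g : G) (h : coeqRel a b x y) :
    coeqRel a b (X.smul g x) (X.smul g y) := by
  obtain ⟨t, rfl, rfl⟩ := h
  exact ⟨A.smul g t, a.equivariant g t, b.equivariant g t⟩

noncomputable def isColimitCoforkOfSurjective {Y : SmGSet G} (π : X ⟶ Y)
    (w : a ≫ π = b ≫ π) (hπ : Function.Surjective π.toFun)
    (hker : ∀ x y, π.toFun x = π.toFun y → Relation.EqvGen (coeqRel a b) x y) :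
    IsColimit (Cofork.ofπ π w) := by
  refine Cofork.IsColimit.mk' _ fun s => ?_
  have hs : ∀ x y, π.toFun x = π.toFun y → s.π.toFun x = s.π.toFun y := by
    intro x y h
    have hrel : ∀ x y, coeqRel a b x y → s.π.toFun x = s.π.toFun y := by
      rintro _ _ ⟨t, rfl, rfl⟩
      exact congrArg (fun m => m.toFun t) s.condition
    exact congrArg (Quot.lift _ hrel) (Quot.eq.2 (hker x y h))
  refine ⟨⟨fun y => s.π.toFun (Function.surjInv hπ y), fun g y => ?_⟩,
    hom_ext fun x => hs _ _ (Function.surjInv_eq hπ _), fun {m} hm => hom_ext fun y => ?_⟩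
  · rw [← s.π.equivariant]
    apply hs
    rw [π.equivariant, Function.surjInv_eq hπ, Function.surjInv_eq hπ]
    rfl
  · obtain ⟨x, rfl⟩ := hπ y
    exact (congrArg (fun m => m.toFun x) hm).trans (hs _ _ (Function.surjInv_eq hπ _).symm)

variable [ContinuousConstSMul G G]

def coeq : SmGSet G where
  α := Quot (coeqRel a b)
  smul g := Quot.map (X.smul g) fun _ _ => coeqRel_smul a b g
  one_smul := Quot.ind fun x => congrArg (Quot.mk _) (X.one_smul x)
  mul_smul g h := Quot.ind fun x => congrArg (Quot.mk _) (X.mul_smul g h x)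
  smooth := Quot.ind fun x => isOpen_of_forall_mul_mem (X.stab_isOpen x) fun g hg h hh => by
    change Quot.mk _ (X.smul (g * h) x) = Quot.mk _ x
    rw [X.mul_smul, show X.smul h x = x from hh]
    exact hg
  finitary := by
    have := X.finitary
    refine Finite.of_surjective (Quot.map (ra := fun x y : X.α => ∃ g : G, X.smul g x = y)
      (rb := fun x y : Quot (coeqRel a b) => ∃ g : G,
        Quot.map (X.smul g) (fun _ _ => coeqRel_smul a b g) x = y)
      (Quot.mk _) fun _ _ ⟨g, hg⟩ => ⟨g, congrArg _ hg⟩) ?_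
    exact Quot.ind <| Quot.ind fun x => ⟨Quot.mk _ x, rfl⟩

def coeqπ : X ⟶ coeq a b :=
  ⟨Quot.mk _, fun _ _ => rfl⟩

theorem coeqπ_surjective : Function.Surjective (coeqπ a b).toFun :=
  Quot.exists_rep

theorem coeq_condition : a ≫ coeqπ a b = b ≫ coeqπ a b := by
  ext t
  exact Quot.sound ⟨t, rfl, rfl⟩

noncomputable def isColimitCoeq : IsColimit (Cofork.ofπ (coeqπ a b) (coeq_condition a b)) :=
  isColimitCoforkOfSurjective a b _ _ (coeqπ_surjective a b) fun _ _ => Quot.eq.1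

end Coequalizer

section Functor

variable {L K : Type} [Group L] [TopologicalSpace L] [Group K] [TopologicalSpace K]
  (Θ : SmGSet L ⥤ SmGSet K)

theorem exists_map_orbitι_eq [PreservesFiniteCoproducts Θ] (Q : SmGSet L) (z : (Θ.obj Q).α) :
    ∃ j t, (Θ.map (Q.orbitι j)).toFun t = z := by
  have := Q.finitary
  exact Cofan.exists_inj_eq (isColimitCofanMkObjOfIsColimit Θ _ _ Q.isColimitOrbitCofan) z

theorem range_map_subset_range_map_subι {P Q : SmGSet L} (m : P ⟶ Q) {S : Set Q.α}
    (hS : ∀ g : L, ∀ x ∈ S, Q.smul g x ∈ S) (hm : ∀ p, m.toFun p ∈ S) :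
    Set.range (Θ.map m).toFun ⊆ Set.range (Θ.map (Q.subι S hS)).toFun := by
  let m' : P ⟶ Q.sub S hS :=
    ⟨fun p => ⟨m.toFun p, hm p⟩, fun g p => Subtype.ext (m.equivariant g p)⟩
  rintro _ ⟨t, rfl⟩
  exact ⟨(Θ.map m').toFun t, by rw [← comp_toFun, ← Θ.map_comp]; rfl⟩

theorem exists_range_map_subι_eq [PreservesFiniteCoproducts Θ]
    (hΘ : ∀ X : SmGSet L, IsTransitive X → IsTransitive (Θ.obj X)) (Q : SmGSet L)
    (R : Set (Θ.obj Q).α) (hR : ∀ g : K, ∀ z ∈ R, (Θ.obj Q).smul g z ∈ R) :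
    ∃ S hS, Set.range (Θ.map (Q.subι S hS)).toFun = R := by
  -- `Θ` sends each orbit of `Q` to a single orbit, so `R` is a union of such images.
  have horbit : ∀ j t t',
      (Θ.map (Q.orbitι j)).toFun t ∈ R → (Θ.map (Q.orbitι j)).toFun t' ∈ R := by
    intro j t t' ht
    obtain ⟨g, rfl⟩ := (hΘ _ (Q.isTransitive_orbit j)).2 t t'
    rw [(Θ.map _).equivariant]
    exact hR g _ ht
  let S : Set Q.α := {q | ∀ t, (Θ.map (Q.orbitι (Quot.mk _ q))).toFun t ∈ R}
  have hS : ∀ g : L, ∀ q ∈ S, Q.smul g q ∈ S := fun g q hq => by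
    have hgq : Quot.mk _ (Q.smul g q) = Quot.mk _ q := Q.smul_mem_orbitSet _ g q rfl
    rwa [Set.mem_ofPred_eq, hgq]
  refine ⟨S, hS, Set.Subset.antisymm ?_ fun w hw => ?_⟩
  · rintro _ ⟨t, rfl⟩
    obtain ⟨j, s, rfl⟩ := exists_map_orbitι_eq Θ (Q.sub S hS) t
    obtain ⟨⟨⟨q, hq⟩, hqj⟩⟩ := (isTransitive_orbit _ j).1
    have hj : ∀ p, (orbitι _ j ≫ Q.subι S hS).toFun p ∈ Q.orbitSet (Quot.mk _ q) := by
      intro p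
      obtain ⟨g, hg⟩ := exists_smul_eq_of_mk_eq _ (p.2.trans hqj.symm)
      exact Quot.sound ⟨g, congrArg Subtype.val hg⟩
    obtain ⟨s', hs'⟩ := range_map_subset_range_map_subι Θ (orbitι _ j ≫ Q.subι S hS)
      (Q.smul_mem_orbitSet (Quot.mk _ q)) hj ⟨s, by rw [Θ.map_comp]⟩
    exact hs' ▸ hq s'
  · obtain ⟨j, s, rfl⟩ := exists_map_orbitι_eq Θ Q w
    refine range_map_subset_range_map_subι Θ (Q.orbitι j) hS (fun p => ?_) ⟨s, rfl⟩
    have hp : Quot.mk _ p.1 = j := p.2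
    change ∀ t, (Θ.map (Q.orbitι (Quot.mk _ p.1))).toFun t ∈ R
    rw [hp]
    exact fun t => horbit j s t hw

end Functor

end SmGSet

open SmGSet in
/-- Let `L` and `K` be pro-oligomorphic groups and let
`Θ : S(L) → S(K)` be an exact atomic functor. Let `X` be an object of `S(L)`, let `Z` be
an object of `S(K)`, and let `f : Θ(X) → Z` be a surjective morphism in `S(K)`. Then
there exist an object `Y` of `S(L)`, a surjective morphism `X → Y` in `S(L)`, and an
isomorphism `Θ(Y) ≅ Z` in `S(K)`. -/
theorem stmt_16 {L K : Type}
    [Group L] [TopologicalSpace L] [IsTopologicalGroup L]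
    [Group K] [TopologicalSpace K] [IsTopologicalGroup K]
    (hL : IsProOligomorphic L) (hK : IsProOligomorphic K)
    (Θ : SmGSet L ⥤ SmGSet K)
    (hexact₁ : Limits.PreservesFiniteLimits Θ)
    (hexact₂ : Limits.PreservesFiniteColimits Θ)
    (hatomic : ∀ X : SmGSet L, IsTransitive X → IsTransitive (Θ.obj X))
    (X : SmGSet L) (Z : SmGSet K) (f : Θ.obj X ⟶ Z)
    (hf : Function.Surjective (SmHom.toFun f)) :
    ∃ (Y : SmGSet L) (p : X ⟶ Y),
      Function.Surjective (SmHom.toFun p) ∧ Nonempty (Θ.obj Y ≅ Z) := by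
  let π₁ := dprodFst X X hL.roelcke
  let π₂ := dprodSnd X X hL.roelcke
  let R : Set (Θ.obj (X.dprod X hL.roelcke)).α :=
    {w | f.toFun ((Θ.map π₁).toFun w) = f.toFun ((Θ.map π₂).toFun w)}
  have hR : ∀ g : K, ∀ w ∈ R, (Θ.obj _).smul g w ∈ R := fun g w hw => by
    simp only [R, Set.mem_ofPred_eq, SmHom.equivariant]
    exact congrArg (Z.smul g) hw
  obtain ⟨S, hS, hSR⟩ := exists_range_map_subι_eq Θ hatomic _ R hR
  let a := subι _ S hS ≫ π₁
  let b := subι _ S hS ≫ π₂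
  have hab : Θ.map a ≫ f = Θ.map b ≫ f := by
    ext t
    have ht : (Θ.map (subι _ S hS)).toFun t ∈ R := hSR ▸ Set.mem_range_self t
    simp only [a, b, Functor.map_comp, comp_toFun]
    exact ht
  have hZ : Limits.IsColimit (Limits.Cofork.ofπ f hab) :=
    isColimitCoforkOfSurjective _ _ f hab hf fun u v huv => by
      obtain ⟨w, rfl, rfl⟩ := BinaryFan.exists_fst_snd_eq hK.roelcke
        (Limits.mapIsLimitOfPreservesOfIsLimit Θ π₁ π₂ (isLimitDprod X X hL.roelcke)) u v
      obtain ⟨t, rfl⟩ : w ∈ Set.range (Θ.map (subι _ S hS)).toFun := hSR ▸ huv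
      exact .rel _ _ ⟨t, by simp [a], by simp [b]⟩
  have hY := Limits.isColimitCoforkMapOfIsColimit Θ _ (isColimitCoeq a b)
  exact ⟨coeq a b, coeqπ a b, coeqπ_surjective a b, ⟨hY.coconePointUniqueUpToIso hZ⟩⟩
end

section
/- For every 𝔾-equivariant map f : ℝ^(n) → ℝ^(m) there exists a unique strictly increasing function i : {1, …, m} → {1, …, n} such that f(x₁, …, xₙ) = (x_{i(1)}, …, x_{i(m)}) for all (x₁, …, xₙ) ∈ ℝ^(n). In particular, the only 𝔾-equivariant map ℝ^(n) → ℝ^(n) is the identity; that is, the automorphism group of the 𝔾-set ℝ^(n) is trivial. -/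
/-!
Every strictly monotone map on a finite subset of an ordered field extends to an order
automorphism: add the points in increasing order, and at each step compose with a piecewise
affine map that fixes everything up to the points already placed. Hence `𝔾` acts transitively on
`ℝ^(n)`, and the stabilizer of a tuple `x` moves every point outside `{x₁, …, xₙ}`. Since an
equivariant `f` sends `x` to a tuple fixed by that stabilizer, each coordinate of `f x` is some
`x_k`; transitivity makes the index independent of `x`.
-/

/-- The set `ℝ^(n)` of strictly increasing `n`-tuples of reals. -/
def RTuple (n : ℕ) : Type := { x : Fin n → ℝ // StrictMono x }

/-- The coordinatewise action of `𝔾 = Aut(ℝ, <)` on `ℝ^(n)`. -/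
def RTuple.act {n : ℕ} (g : ℝ ≃o ℝ) (x : RTuple n) : RTuple n :=
  ⟨fun i => g (x.1 i), fun _ _ hij => g.strictMono (x.2 hij)⟩

open Finset

section OrderedField

variable {K : Type*} [Field K] [LinearOrder K] [IsStrictOrderedRing K]

theorem exists_orderIso_eqOn_Iic_apply_eq {c p q : K} (hp : c < p) (hq : c < q) :
    ∃ g : K ≃o K, Set.EqOn g id (Set.Iic c) ∧ g p = q := by
  let F : K → K → K := fun μ t => if t ≤ c then t else c + μ * (t - c)
  have hFc {μ t : K} (hμ : 0 < μ) (ht : c < t) : c < F μ t := by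
    simp only [F, if_neg ht.not_ge]
    nlinarith
  have hF {μ : K} (hμ : 0 < μ) : StrictMono (F μ) := by
    intro s t hst
    simp only [F]
    split_ifs <;> nlinarith
  set μ := (q - c) / (p - c)
  have hμ : 0 < μ := div_pos (sub_pos.2 hq) (sub_pos.2 hp)
  have hinv : Function.RightInverse (F μ⁻¹) (F μ) := by
    intro t
    rcases le_or_gt t c with ht | ht
    · simp only [F, if_pos ht]
    · have := hFc (inv_pos.2 hμ) ht
      simp only [F, if_neg ht.not_ge] at this ⊢
      rw [if_neg this.not_ge]
      field_simp
      ring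
  refine ⟨(hF hμ).orderIsoOfRightInverse _ (F μ⁻¹) hinv, fun t ht => if_pos ht, ?_⟩
  change F μ p = q
  simp only [F, if_neg hp.not_ge, μ]
  field_simp [(sub_pos.2 hp).ne']
  ring

theorem exists_orderIso_eqOn_of_strictMonoOn (s : Finset K) {φ : K → K}
    (hφ : StrictMonoOn φ s) : ∃ g : K ≃o K, Set.EqOn g φ s := by
  induction s using Finset.induction_on_max with
  | empty => exact ⟨OrderIso.refl K, by simp⟩
  | insert a s hlt ih =>
    obtain ⟨g, hg⟩ := ih (hφ.mono (by simp))
    have hφlt {x} (hx : x ∈ s) : φ x < φ a :=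
      hφ (by simp [hx]) (by simp) (hlt x hx)
    -- `h` below fixes everything up to `c`: it keeps the values on `s` and moves `g a` to `φ a`
    set c := (insert (min (g a) (φ a) - 1) (s.image φ)).max' (insert_nonempty _ _)
    have hc : c < min (g a) (φ a) := by
      refine (max'_lt_iff _ _).2 fun y hy => ?_
      simp only [mem_insert, mem_image] at hy
      rcases hy with rfl | ⟨x, hx, rfl⟩
      · linarith
      · exact lt_min (hg hx ▸ g.strictMono (hlt x hx)) (hφlt hx)
    have hφc {x} (hx : x ∈ s) : φ x ≤ c := le_max' _ _ (mem_insert_of_mem (mem_image_of_mem φ hx))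
    obtain ⟨h, hfix, hmap⟩ :=
      exists_orderIso_eqOn_Iic_apply_eq (lt_min_iff.1 hc).1 (lt_min_iff.1 hc).2
    refine ⟨g.trans h, fun x hx => ?_⟩
    rcases mem_insert.1 (Finset.mem_coe.1 hx) with rfl | hx
    · simp [hmap]
    · simp [hg hx, hfix (hφc hx)]

theorem exists_orderIso_eqOn_id_apply_ne (s : Finset K) {y : K} (hy : y ∉ s) :
    ∃ g : K ≃o K, Set.EqOn g id s ∧ g y ≠ y := by
  set d := (insert (y + 1) (s.filter (y < ·))).min' (insert_nonempty _ _)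
  have hyd : y < d := by
    refine (lt_min'_iff _ _).2 fun t ht => ?_
    simp only [mem_insert, mem_filter] at ht
    rcases ht with rfl | ⟨-, ht⟩
    · linarith
    · exact ht
  have hd {t} (ht : t ∈ s) (hyt : y < t) : d ≤ t := min'_le _ _ (by simp [ht, hyt])
  obtain ⟨y', hyy', hy'd⟩ := exists_between hyd
  have hs {t} (ht : t ∈ s) : Function.update id y y' t = t :=
    Function.update_of_ne (ne_of_mem_of_not_mem ht hy) _ _
  have hφ : StrictMonoOn (Function.update id y y') (insert y s : Finset K) := by
    rintro t ht u hu htu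
    rw [coe_insert, Set.mem_insert_iff, mem_coe] at ht hu
    rcases ht with rfl | ht <;> rcases hu with rfl | hu
    · exact absurd htu (lt_irrefl _)
    · rw [Function.update_self, hs hu]
      exact hy'd.trans_le (hd hu htu)
    · rw [Function.update_self, hs ht]
      exact htu.trans hyy'
    · rwa [hs ht, hs hu]
  obtain ⟨g, hg⟩ := exists_orderIso_eqOn_of_strictMonoOn _ hφ
  refine ⟨g, fun t ht => ?_, ?_⟩
  · rw [hg (by simp [mem_coe.1 ht]), hs ht, id]
  · rw [hg (by simp), Function.update_self]
    exact hyy'.ne'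

theorem exists_orderIso_comp_eq {ι : Type*} [LinearOrder ι] [Fintype ι] {a b : ι → K}
    (ha : StrictMono a) (hb : StrictMono b) : ∃ g : K ≃o K, ∀ i, g (a i) = b i := by
  obtain ⟨g, hg⟩ := exists_orderIso_eqOn_of_strictMonoOn (univ.image a)
    (φ := Function.extend a b id) (by
      simp only [coe_image, coe_univ, Set.image_univ]
      rintro _ ⟨i, rfl⟩ _ ⟨j, rfl⟩ hij
      simpa [ha.injective.extend_apply] using hb (ha.lt_iff_lt.1 hij))
  exact ⟨g, fun i => by simpa [ha.injective.extend_apply] using hg (by simp : a i ∈ _)⟩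

end OrderedField

namespace RTuple

variable {n m : ℕ}

def IsEquivariant (f : RTuple n → RTuple m) : Prop :=
  ∀ (g : ℝ ≃o ℝ) (x : RTuple n), f (act g x) = act g (f x)

def basePoint (n : ℕ) : RTuple n :=
  ⟨fun i => (i : ℕ), Nat.strictMono_cast.comp Fin.val_strictMono⟩

theorem exists_act_eq (x y : RTuple n) : ∃ g : ℝ ≃o ℝ, act g x = y :=
  (exists_orderIso_comp_eq x.2 y.2).imp fun _ h => Subtype.ext (funext h)

namespace IsEquivariant

variable {f : RTuple n → RTuple m}

theorem exists_apply_eq (hf : IsEquivariant f) (x : RTuple n) (j : Fin m) :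
    ∃ k, (f x).1 j = x.1 k := by
  by_contra! h
  obtain ⟨g, hfix, hmove⟩ :=
    exists_orderIso_eqOn_id_apply_ne (univ.image x.1) (y := (f x).1 j)
      (by simpa [eq_comm] using h)
  have hx : act g x = x := Subtype.ext (funext fun k => hfix (by simp))
  have hfx := hf g x
  rw [hx] at hfx
  exact hmove (congrArg (fun y : RTuple m => y.1 j) hfx).symm

theorem existsUnique_strictMono_index (hf : IsEquivariant f) :
    ∃! i : Fin m → Fin n, StrictMono i ∧ ∀ (x : RTuple n) (j : Fin m), (f x).1 j = x.1 (i j) := by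
  set x₀ := basePoint n
  choose i hi using hf.exists_apply_eq x₀
  have hmono : StrictMono i := fun j j' hjj' => by
    have := (f x₀).2 hjj'
    rwa [hi, hi, x₀.2.lt_iff_lt] at this
  have hval (x : RTuple n) (j : Fin m) : (f x).1 j = x.1 (i j) := by
    obtain ⟨g, rfl⟩ := exists_act_eq x₀ x
    rw [hf]
    exact congrArg g (hi j)
  refine ⟨i, ⟨hmono, hval⟩, fun i' ⟨_, hi'⟩ => funext fun j => ?_⟩
  exact x₀.2.injective ((hi' x₀ j).symm.trans (hi j))

theorem eq_id {f : RTuple n → RTuple n} (hf : IsEquivariant f) : f = id := by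
  obtain ⟨i, ⟨hmono, hval⟩, -⟩ := hf.existsUnique_strictMono_index
  funext x
  exact Subtype.ext (funext fun j => by rw [hval, hmono.eq_id, id, id])

end IsEquivariant

end RTuple

/-- For every `𝔾`-equivariant map `f : ℝ^(n) → ℝ^(m)` there exists a
unique strictly increasing function `i : {1, …, m} → {1, …, n}` such that
`f(x₁, …, xₙ) = (x_{i(1)}, …, x_{i(m)})` for all `(x₁, …, xₙ) ∈ ℝ^(n)`. In particular,
the only `𝔾`-equivariant map `ℝ^(n) → ℝ^(n)` is the identity; that is, the automorphism
group of the `𝔾`-set `ℝ^(n)` is trivial. -/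
theorem stmt_19 (n m : ℕ) (f : RTuple n → RTuple m)
    (hf : ∀ (g : ℝ ≃o ℝ) (x : RTuple n), f (RTuple.act g x) = RTuple.act g (f x)) :
    (∃! i : Fin m → Fin n, StrictMono i ∧ ∀ (x : RTuple n) (j : Fin m),
      (f x).1 j = x.1 (i j)) ∧
    (∀ f' : RTuple n → RTuple n,
      (∀ (g : ℝ ≃o ℝ) (x : RTuple n), f' (RTuple.act g x) = RTuple.act g (f' x)) →
        f' = id) :=
  ⟨RTuple.IsEquivariant.existsUnique_strictMono_index hf,
    fun _ hf' => RTuple.IsEquivariant.eq_id hf'⟩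
end
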